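/- Let α ≥ 1 and let M be the automorphism of (ℤ/3^αℤ)² given by M(a,b) = (−b, a−b). Then there is exactly one M-stable subgroup of (ℤ/3^αℤ)² of order 3^α. -/

import Mathlib

/-!
Let `ξ` be `Mxi n` in the endomorphism ring and `N = 1 - ξ`. From `ξ² + ξ + 1 = 0` we get
`N² = -3ξ`, so on `(ℤ/3^αℤ)²` the map `N` is nilpotent with `N^(2α) = 0`; it plays the role of the
uniformizer `1 - ω` of `ℤ[ω]/(3^α)`. The kernel of `N` has order dividing `3`, so a nonzero
`N`-stable subgroup `S` contains `ker N` and therefore equals `N⁻¹(N S)`; by induction every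
`N`-stable subgroup is one of the kernels `ker N^k`, which form a chain. A `ξ`-stable subgroup is
`N`-stable, and `|ker N^α| = 3^α` because `|ker N^α| ≤ 3^α` while `range N^α ≤ ker N^α`.
-/

/-- The order-3 automorphism of `(ℤ/nℤ)²` given by the matrix `[[0,-1],[1,-1]]`,
i.e. `(a,b) ↦ (-b, a-b)`. -/
def Mxi (n : ℕ) : (ZMod n × ZMod n) →+ (ZMod n × ZMod n) :=
  AddMonoidHom.mk' (fun z => (-z.2, z.1 - z.2)) (by
    intro a b
    ext
    · simp
      ring
    · simp
      ring)

open AddSubgroup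

theorem AddSubgroup.eq_bot_or_eq_of_le_of_card_dvd_prime {G : Type*} [AddGroup G]
    {H K : AddSubgroup G} [Finite H] {p : ℕ} (hp : p.Prime) (hH : Nat.card H ∣ p) (hK : K ≤ H) :
    K = ⊥ ∨ K = H := by
  rcases (Nat.dvd_prime hp).1 ((card_dvd_of_le hK).trans hH) with h | h
  · exact Or.inl (card_eq_one.1 h)
  · exact Or.inr (eq_of_le_of_card_ge hK (h ▸ Nat.le_of_dvd hp.pos hH))

namespace AddMonoid.End

variable {G : Type*} [AddCommGroup G]

theorem ker_mul_eq_comap (f g : AddMonoid.End G) : (f * g).ker = f.ker.comap g :=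
  rfl

theorem ker_one : (1 : AddMonoid.End G).ker = ⊥ :=
  AddMonoidHom.ker_id

theorem ker_zero : (0 : AddMonoid.End G).ker = ⊤ :=
  AddMonoidHom.ker_zero

theorem ker_le_ker_mul (f g : AddMonoid.End G) : g.ker ≤ (f * g).ker := by
  intro x hx
  rw [ker_mul_eq_comap]
  exact mem_comap.2 ((AddMonoidHom.mem_ker.1 hx).symm ▸ zero_mem _)

theorem ker_pow_le_ker_pow_of_le (N : AddMonoid.End G) {j k : ℕ} (hjk : j ≤ k) :
    (N ^ j).ker ≤ (N ^ k).ker := by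
  rw [← Nat.sub_add_cancel hjk, pow_add]
  exact ker_le_ker_mul _ _

theorem map_one_sub_le {M : AddMonoid.End G} {S : AddSubgroup G} (hS : S.map M ≤ S) :
    S.map (1 - M) ≤ S := by
  rintro _ ⟨x, hx, rfl⟩
  exact sub_mem hx (hS (mem_map_of_mem M hx))

theorem map_ker_le_of_commute {M f : AddMonoid.End G} (h : Commute M f) :
    f.ker.map M ≤ f.ker := by
  rintro _ ⟨x, hx, rfl⟩
  change (f * M) x = 0
  rw [← h.eq]
  exact (congrArg M (AddMonoidHom.mem_ker.1 hx)).trans (map_zero M)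

theorem map_ker_eq_of_commute {M f : AddMonoid.End G} (h : Commute M f) {m : ℕ}
    (hM : M ^ (m + 1) = 1) : f.ker.map M = f.ker := by
  refine le_antisymm (map_ker_le_of_commute h) ?_
  calc f.ker = f.ker.map (M ^ (m + 1)) := by rw [hM]; exact (map_id f.ker).symm
    _ = (f.ker.map (M ^ m)).map M := by rw [pow_succ']; exact (map_map _ _ _).symm
    _ ≤ f.ker.map M := map_mono (map_ker_le_of_commute (h.pow_left m))

theorem exists_eq_ker_pow_of_map_le {N : AddMonoid.End G} (hN : IsNilpotent N)
    (hker : ∀ H ≤ N.ker, H = ⊥ ∨ H = N.ker) {S : AddSubgroup G} (hS : S.map N ≤ S) :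
    ∃ k, S = (N ^ k).ker := by
  obtain ⟨m, hm⟩ := hN
  suffices ∀ k, ∀ S : AddSubgroup G, S.map N ≤ S → S ≤ (N ^ k).ker → ∃ j, S = (N ^ j).ker from
    this m S hS (by rw [hm, ker_zero]; exact le_top)
  intro k
  induction k with
  | zero =>
    intro S _ hS0
    rw [pow_zero, ker_one, le_bot_iff] at hS0
    exact ⟨0, by rw [hS0, pow_zero, ker_one]⟩
  | succ k ih =>
    intro S hNS hSk
    rw [pow_succ, ker_mul_eq_comap] at hSk
    obtain ⟨j, hj⟩ := ih (S.map N) (map_mono hNS) (map_le_iff_le_comap.2 hSk)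
    cases j with
    | zero =>
      rw [pow_zero, ker_one] at hj
      rcases hker S ((AddSubgroup.map_eq_bot_iff _).1 hj) with rfl | rfl
      · exact ⟨0, by rw [pow_zero, ker_one]⟩
      · exact ⟨1, by rw [pow_one]⟩
    | succ j =>
      have hkerS : N.ker ≤ S := by
        have := (N.ker_pow_le_ker_pow_of_le (Nat.le_add_left 1 j)).trans (hj.symm.trans_le hNS)
        rwa [pow_one] at this
      refine ⟨j + 2, ?_⟩
      rw [pow_succ, ker_mul_eq_comap, ← hj]
      exact ((comap_map_eq N S).trans (sup_of_le_left hkerS)).symm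

variable [Finite G]

theorem card_ker_mul_le (f g : AddMonoid.End G) :
    Nat.card (f * g).ker ≤ Nat.card f.ker * Nat.card g.ker := by
  calc Nat.card (f * g).ker = Nat.card g.ker * Nat.card ((f * g).ker.map g) := by
        rw [← relIndex_bot_left, ← relIndex_mul_relIndex ⊥ _ _ bot_le (ker_le_ker_mul f g),
          relIndex_bot_left]
        exact congrArg _ (relIndex_ker _ _)
    _ ≤ Nat.card g.ker * Nat.card f.ker := by
        rw [ker_mul_eq_comap]
        exact Nat.mul_le_mul_left _ (card_le_of_le (map_comap_le g f.ker))
    _ = Nat.card f.ker * Nat.card g.ker := mul_comm _ _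

theorem card_ker_pow_le (N : AddMonoid.End G) (k : ℕ) :
    Nat.card (N ^ k).ker ≤ Nat.card N.ker ^ k := by
  induction k with
  | zero => rw [pow_zero, ker_one, card_bot, pow_zero]
  | succ k ih =>
    rw [pow_succ, pow_succ]
    exact (card_ker_mul_le _ _).trans (Nat.mul_le_mul_right _ ih)

theorem card_ker_pow_eq_of_pow_two_mul_eq_zero {N : AddMonoid.End G} {p a : ℕ}
    (hN : N ^ (2 * a) = 0) (hker : Nat.card N.ker ≤ p) (hG : Nat.card G = p ^ (2 * a)) :
    Nat.card (N ^ a).ker = p ^ a := by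
  have hrange : (N ^ a).range ≤ (N ^ a).ker := by
    rintro _ ⟨x, rfl⟩
    change (N ^ a * N ^ a) x = 0
    rw [← pow_add, ← two_mul, hN, zero_apply]
  have hmul : Nat.card (N ^ a).range * Nat.card (N ^ a).ker = p ^ a * p ^ a := by
    rw [← pow_add, ← two_mul, ← hG]
    exact index_ker (N ^ a) ▸ index_mul_card (N ^ a).ker
  have hle : Nat.card (N ^ a).ker ≤ p ^ a :=
    (card_ker_pow_le N a).trans (Nat.pow_le_pow_left hker a)
  have := card_le_of_le hrange
  nlinarith

theorem ker_pow_eq_of_card_eq (N : AddMonoid.End G) {j k : ℕ}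
    (h : Nat.card (N ^ j).ker = Nat.card (N ^ k).ker) : (N ^ j).ker = (N ^ k).ker := by
  rcases le_total j k with hjk | hkj
  · exact eq_of_le_of_card_ge (N.ker_pow_le_ker_pow_of_le hjk) h.ge
  · exact (eq_of_le_of_card_ge (N.ker_pow_le_ker_pow_of_le hkj) h.le).symm

end AddMonoid.End

open AddMonoid.End

section Xi

variable (n : ℕ)

def xi : AddMonoid.End (ZMod n × ZMod n) :=
  Mxi n

theorem xi_apply (z : ZMod n × ZMod n) : xi n z = (-z.2, z.1 - z.2) :=
  rfl

theorem one_sub_xi_apply (z : ZMod n × ZMod n) :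
    (1 - xi n) z = (z.1 + z.2, 2 * z.2 - z.1) := by
  change z - xi n z = _
  ext <;> simp only [xi_apply, Prod.fst_sub, Prod.snd_sub] <;> ring

theorem xi_pow_three : xi n ^ 3 = 1 := by
  ext z <;> simp [coe_pow, xi_apply]
  ring

theorem one_sub_xi_sq : (1 - xi n) ^ 2 = 3 * -xi n := by
  ext1 z
  change (1 - xi n) ((1 - xi n) z) = 3 • -xi n z
  rw [one_sub_xi_apply, one_sub_xi_apply, xi_apply]
  ext <;> simp <;> ring

theorem natCast_self_zmod_prod : (n : AddMonoid.End (ZMod n × ZMod n)) = 0 := by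
  ext z <;> simp

theorem card_ker_one_sub_xi_le [NeZero n] : Nat.card (1 - xi n).ker ≤ 3 := by
  classical
  have hker : ∀ z ∈ (1 - xi n).ker, z.1 = -z.2 ∧ 3 • z.2 = 0 := by
    intro z hz
    have hz : (1 - xi n) z = 0 := AddMonoidHom.mem_ker.1 hz
    rw [one_sub_xi_apply, Prod.mk_eq_zero] at hz
    exact ⟨eq_neg_of_add_eq_zero_left hz.1, by linear_combination hz.1 + hz.2⟩
  have hinj : Function.Injective fun z : (1 - xi n).ker =>
      (⟨z.1.2, (hker z z.2).2⟩ : {y : ZMod n // 3 • y = 0}) := by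
    intro z w hzw
    have h2 : z.1.2 = w.1.2 := congrArg Subtype.val hzw
    exact Subtype.ext (Prod.ext (by rw [(hker z z.2).1, (hker w w.2).1, h2]) h2)
  calc Nat.card (1 - xi n).ker ≤ Nat.card {y : ZMod n // 3 • y = 0} :=
        Nat.card_le_card_of_injective _ hinj
    _ = Finset.card {y : ZMod n | 3 • y = 0} := by
        rw [Nat.card_eq_fintype_card, Fintype.card_subtype]
    _ ≤ 3 := IsAddCyclic.card_nsmul_eq_zero_le (by norm_num)

end Xi

section ThreePower

variable (α : ℕ)

theorem card_zmod_pow_prod (p : ℕ) : Nat.card (ZMod (p ^ α) × ZMod (p ^ α)) = p ^ (2 * α) := by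
  rw [Nat.card_prod, Nat.card_zmod, ← pow_add, two_mul]

theorem one_sub_xi_pow_two_mul : (1 - xi (3 ^ α)) ^ (2 * α) = 0 := by
  have h3 : (3 : AddMonoid.End (ZMod (3 ^ α) × ZMod (3 ^ α))) ^ α = 0 := by
    exact_mod_cast natCast_self_zmod_prod (3 ^ α)
  rw [pow_mul, one_sub_xi_sq, (Commute.ofNat_left _ _).mul_pow, h3, zero_mul]

theorem card_ker_one_sub_xi_dvd : Nat.card (1 - xi (3 ^ α)).ker ∣ 3 := by
  obtain ⟨i, -, hi⟩ := (Nat.dvd_prime_pow Nat.prime_three).1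
    ((card_addSubgroup_dvd_card _).trans (card_zmod_pow_prod α 3).dvd)
  have h3 : 3 ^ i ≤ 3 ^ 1 := hi ▸ card_ker_one_sub_xi_le _
  rw [hi]
  exact pow_dvd_pow 3 ((Nat.pow_le_pow_iff_right (by norm_num)).1 h3)

theorem card_ker_one_sub_xi_pow : Nat.card ((1 - xi (3 ^ α)) ^ α).ker = 3 ^ α :=
  card_ker_pow_eq_of_pow_two_mul_eq_zero (one_sub_xi_pow_two_mul α) (card_ker_one_sub_xi_le _)
    (card_zmod_pow_prod α 3)

theorem map_Mxi_eq_and_card_eq_iff (S : AddSubgroup (ZMod (3 ^ α) × ZMod (3 ^ α))) :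
    S.map (Mxi (3 ^ α)) = S ∧ Nat.card S = 3 ^ α ↔ S = ((1 - xi (3 ^ α)) ^ α).ker := by
  constructor
  · rintro ⟨hS, hcard⟩
    obtain ⟨k, rfl⟩ := exists_eq_ker_pow_of_map_le ⟨2 * α, one_sub_xi_pow_two_mul α⟩
      (fun H hH => eq_bot_or_eq_of_le_of_card_dvd_prime Nat.prime_three
        (card_ker_one_sub_xi_dvd α) hH) (map_one_sub_le (M := xi (3 ^ α)) hS.le)
    exact ker_pow_eq_of_card_eq _ (hcard.trans (card_ker_one_sub_xi_pow α).symm)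
  · rintro rfl
    exact ⟨map_ker_eq_of_commute (((Commute.one_right _).sub_right (Commute.refl _)).pow_right α)
      (xi_pow_three _), card_ker_one_sub_xi_pow α⟩

end ThreePower

theorem count_Mxi_stable_three_general (α : ℕ) :
    Nat.card {S : AddSubgroup (ZMod (3 ^ α) × ZMod (3 ^ α)) //
        S.map (Mxi (3 ^ α)) = S ∧ Nat.card S = 3 ^ α} = 1 := by
  rw [Nat.card_congr (Equiv.subtypeEquivRight (map_Mxi_eq_and_card_eq_iff α))]
  exact Nat.card_unique

/-- For `α ≥ 1` there is exactly one subgroup of `(ℤ/3^αℤ)²` of order `3^α` stable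
under `(a,b) ↦ (-b, a-b)`. -/
theorem count_Mxi_stable_three (α : ℕ) (hα : 1 ≤ α) :
    Nat.card {S : AddSubgroup (ZMod (3 ^ α) × ZMod (3 ^ α)) //
        S.map (Mxi (3 ^ α)) = S ∧ Nat.card S = 3 ^ α} = 1 :=
  count_Mxi_stable_three_general α
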